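/- For real a, b, c > 0 with c ≠ b, a < 1, and b, c > a − 1, the series Σ_{n=0}^∞ (n+1)·(a)_n (b)_n (c)_n / ((b+1)_n (c+1)_n (1)_n) equals (bc·Γ(1−a)/(c−b))·[(1−b)Γ(b)/Γ(1−a+b) − (1−c)Γ(c)/Γ(1−a+c)]. -/

import Mathlib

/-!
Since `(b)_n / (b+1)_n = b / (n+b)`, the summand is `b c (n+1) / ((n+b)(n+c))` times the binomial
coefficient `(a)_n / n!`, and partial fractions split it into two series `∑ (a)_n / n! / (n+x)`.
Expanding `(1-s)^(-a)` by the binomial series and integrating term by term (monotone convergence)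
identifies each of them with the Beta integral `∫₀¹ s^(x-1) (1-s)^(-a) ds = Γ(x) Γ(1-a) / Γ(x+1-a)`.
-/

open Real MeasureTheory Set Finset
open scoped Nat

noncomputable def poch (x : ℝ) (n : ℕ) : ℝ := (ascPochhammer ℝ n).eval x

lemma poch_nonneg {x : ℝ} (hx : 0 ≤ x) (n : ℕ) : 0 ≤ poch x n := by
  induction n with
  | zero => simp [poch]
  | succ n ih => rw [poch, ascPochhammer_succ_eval]; exact mul_nonneg ih (by positivity)

lemma poch_add_one {x : ℝ} (hx : x ≠ 0) (n : ℕ) : poch (x + 1) n = poch x n * (x + n) / x := by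
  have h : x * poch (x + 1) n = poch x n * (x + n) := by
    rw [poch, poch, ← ascPochhammer_succ_eval, ascPochhammer_succ_left]
    simp [Polynomial.eval_comp]
  rw [eq_div_iff hx, ← h, mul_comm]

lemma Ring.choose_add_natCast_sub_one_eq_poch_div_factorial (a : ℝ) (n : ℕ) :
    Ring.choose (a + n - 1) n = poch a n / n ! := by
  rw [Ring.choose_eq_smul, Polynomial.descPochhammer_smeval_eq_ascPochhammer,
    show a + n - 1 - n + 1 = a by ring, Polynomial.ascPochhammer_smeval_cast,
    Polynomial.ascPochhammer_smeval_eq_eval, smul_eq_mul, inv_mul_eq_div, poch]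

lemma hasSum_pow_mul_poch_div_factorial (a : ℝ) {t : ℝ} (ht : |t| < 1) :
    HasSum (fun n ↦ t ^ n * (poch a n / n !)) ((1 - t) ^ (-a)) := by
  have h := (one_div_one_sub_rpow_hasFPowerSeriesOnBall_zero a).hasSum (y := t)
    (by simpa [enorm_eq_nnnorm, ← NNReal.coe_lt_coe] using ht)
  simpa [FormalMultilinearSeries.ofScalars_apply_eq,
    Ring.choose_add_natCast_sub_one_eq_poch_div_factorial,
    rpow_neg (show (0 : ℝ) ≤ 1 - t by linarith [abs_lt.mp ht])] using h

lemma Complex.ofReal_rpow_mul_one_sub_rpow {s : ℝ} (hs : s ∈ Icc (0 : ℝ) 1) (x y : ℝ) :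
    ((s ^ (x - 1) * (1 - s) ^ (y - 1) : ℝ) : ℂ) =
      (s : ℂ) ^ ((x : ℂ) - 1) * (1 - (s : ℂ)) ^ ((y : ℂ) - 1) := by
  push_cast
  rw [Complex.ofReal_cpow hs.1, Complex.ofReal_cpow (sub_nonneg.mpr hs.2)]
  push_cast
  ring

lemma integrableOn_rpow_mul_one_sub_rpow {x y : ℝ} (hx : 0 < x) (hy : 0 < y) :
    IntegrableOn (fun s : ℝ ↦ s ^ (x - 1) * (1 - s) ^ (y - 1)) (Ioo 0 1) := by
  have h : IntegrableOn (fun s : ℝ ↦ ((s : ℂ) ^ ((x : ℂ) - 1) * (1 - (s : ℂ)) ^ ((y : ℂ) - 1)).re)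
      (Ioc 0 1) := ((intervalIntegrable_iff_integrableOn_Ioc_of_le zero_le_one).mp
    (Complex.betaIntegral_convergent (u := x) (v := y) (by simpa) (by simpa))).re
  refine (h.mono_set Ioo_subset_Ioc_self).congr_fun (fun s hs ↦ ?_) measurableSet_Ioo
  simp only [← Complex.ofReal_rpow_mul_one_sub_rpow (Ioo_subset_Icc_self hs), Complex.ofReal_re]

lemma integral_rpow_mul_one_sub_rpow {x y : ℝ} (hx : 0 < x) (hy : 0 < y) :
    ∫ s in Ioo (0 : ℝ) 1, s ^ (x - 1) * (1 - s) ^ (y - 1) = Gamma x * Gamma y / Gamma (x + y) := by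
  have h := Complex.Gamma_mul_Gamma_eq_betaIntegral (s := x) (t := y) (by simpa) (by simpa)
  rw [Complex.betaIntegral, intervalIntegral.integral_of_le zero_le_one,
    integral_Ioc_eq_integral_Ioo,
    ← setIntegral_congr_fun measurableSet_Ioo
      (fun s hs ↦ Complex.ofReal_rpow_mul_one_sub_rpow (Ioo_subset_Icc_self hs) x y),
    integral_complex_ofReal, ← Complex.ofReal_add] at h
  simp only [Complex.Gamma_ofReal] at h
  rw [eq_div_iff (Gamma_pos_of_pos (add_pos hx hy)).ne', mul_comm]
  exact_mod_cast h.symm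

lemma integral_Ioo_zero_one_rpow {r : ℝ} (hr : -1 < r) :
    ∫ s in Ioo (0 : ℝ) 1, s ^ r = 1 / (r + 1) := by
  rw [← integral_Ioc_eq_integral_Ioo, ← intervalIntegral.integral_of_le zero_le_one,
    integral_rpow (Or.inl hr), one_rpow, zero_rpow (by linarith), sub_zero]

lemma hasSum_poch_div_factorial_div_add {a x : ℝ} (ha : 0 ≤ a) (ha1 : a < 1) (hx : 0 < x) :
    HasSum (fun n : ℕ ↦ poch a n / n ! / (n + x))
      (Gamma x * Gamma (1 - a) / Gamma (x + (1 - a))) := by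
  set g : ℕ → ℝ → ℝ := fun n s ↦ poch a n / n ! * s ^ ((n : ℝ) + x - 1)
  have hr (n : ℕ) : -1 < (n : ℝ) + x - 1 := by linarith [n.cast_nonneg (α := ℝ)]
  have hg_int (n : ℕ) : IntegrableOn (g n) (Ioo 0 1) :=
    ((intervalIntegral.integrableOn_Ioo_rpow_iff zero_lt_one).mpr (hr n)).const_mul _
  have hg_integral (n : ℕ) : ∫ s in Ioo (0 : ℝ) 1, g n s = poch a n / n ! / (n + x) := by
    rw [integral_const_mul, integral_Ioo_zero_one_rpow (hr n), sub_add_cancel, mul_one_div]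
  have hg_nonneg (n : ℕ) {s : ℝ} (hs : s ∈ Ioo (0 : ℝ) 1) : 0 ≤ g n s :=
    mul_nonneg (div_nonneg (poch_nonneg ha n) (by positivity)) (rpow_nonneg hs.1.le _)
  have hg_hasSum {s : ℝ} (hs : s ∈ Ioo (0 : ℝ) 1) :
      HasSum (fun n ↦ g n s) (s ^ (x - 1) * (1 - s) ^ ((1 - a) - 1)) := by
    have h := (hasSum_pow_mul_poch_div_factorial a (t := s)
      (by rw [abs_of_pos hs.1]; exact hs.2)).mul_left (s ^ (x - 1))
    rw [sub_sub_cancel_left]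
    refine h.congr_fun fun n ↦ ?_
    simp only [g]
    rw [add_sub_assoc, add_comm, rpow_add hs.1, rpow_natCast]
    ring
  rw [hasSum_iff_tendsto_nat_of_nonneg fun n ↦ div_nonneg (div_nonneg (poch_nonneg ha n)
    (by positivity)) (by positivity), ← integral_rpow_mul_one_sub_rpow hx (sub_pos.mpr ha1)]
  simp_rw [← hg_integral, ← integral_finsetSum _ fun n _ ↦ hg_int n]
  refine integral_tendsto_of_tendsto_of_monotone
    (fun N ↦ integrable_finsetSum _ fun n _ ↦ hg_int n)
    (integrableOn_rpow_mul_one_sub_rpow hx (sub_pos.mpr ha1)) ?_ ?_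
  · filter_upwards [ae_restrict_mem measurableSet_Ioo] with s hs
    exact monotone_nat_of_le_succ fun N ↦ by
      rw [sum_range_succ]; exact le_add_of_nonneg_right (hg_nonneg N hs)
  · filter_upwards [ae_restrict_mem measurableSet_Ioo] with s hs
    exact (hg_hasSum hs).tendsto_sum_nat

/-- Partial fractions: `(n+1)(c-b) = (1-b)(n+c) - (1-c)(n+b)`. -/
lemma summand_eq_partialFractions (a : ℝ) {b c : ℝ} (hb : 0 < b) (hc : 0 < c) (hbc : c ≠ b)
    (n : ℕ) :
    ((n : ℝ) + 1) * (poch a n * poch b n * poch c n) /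
        (poch (b + 1) n * poch (c + 1) n * poch 1 n) =
      b * c / (c - b) *
        ((1 - b) * (poch a n / n ! / (n + b)) - (1 - c) * (poch a n / n ! / (n + c))) := by
  have hbn := ascPochhammer_pos n b hb
  have hcn := ascPochhammer_pos n c hc
  have hcb : c - b ≠ 0 := sub_ne_zero.mpr hbc
  have hnb : (n : ℝ) + b ≠ 0 := by positivity
  have hnc : (n : ℝ) + c ≠ 0 := by positivity
  rw [poch_add_one hb.ne', poch_add_one hc.ne']
  simp only [poch, ascPochhammer_eval_one]
  field_simp
  ring

theorem sum_np1_3F2_general (a b c : ℝ) (ha : 0 < a) (hb : 0 < b) (hc : 0 < c)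
    (hbc : c ≠ b) (ha1 : a < 1) :
    ∑' n : ℕ, ((n : ℝ) + 1) * (poch a n * poch b n * poch c n) /
        (poch (b + 1) n * poch (c + 1) n * poch 1 n) =
      b * c * Real.Gamma (1 - a) / (c - b) *
        ((1 - b) * Real.Gamma b / Real.Gamma (1 - a + b) -
          (1 - c) * Real.Gamma c / Real.Gamma (1 - a + c)) := by
  have hB := (hasSum_poch_div_factorial_div_add ha.le ha1 hb).mul_left (1 - b)
  have hC := (hasSum_poch_div_factorial_div_add ha.le ha1 hc).mul_left (1 - c)
  rw [((hB.sub hC).mul_left (b * c / (c - b))).congr_fun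
    (summand_eq_partialFractions a hb hc hbc) |>.tsum_eq, add_comm b, add_comm c]
  ring

theorem sum_np1_3F2 (a b c : ℝ) (ha : 0 < a) (hb : 0 < b) (hc : 0 < c)
    (hbc : c ≠ b) (ha1 : a < 1) (hab : a - 1 < b) (hac : a - 1 < c) :
    ∑' n : ℕ, ((n : ℝ) + 1) * (poch a n * poch b n * poch c n) /
        (poch (b + 1) n * poch (c + 1) n * poch 1 n) =
      b * c * Real.Gamma (1 - a) / (c - b) *
        ((1 - b) * Real.Gamma b / Real.Gamma (1 - a + b) -
          (1 - c) * Real.Gamma c / Real.Gamma (1 - a + c)) :=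
  sum_np1_3F2_general a b c ha hb hc hbc ha1
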